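/- Suppose the standing assumptions hold, together with Assumption A2, Assumption A3, Assumption A4(r) for r = 1, and Assumption A5 (existence of empirical minimisers θ̂_n of L̂_n for all n and a unique well-separated population minimiser θ*). Then the empirical minimiser is strongly consistent: θ̂_n → θ* almost surely as n → ∞. -/

import Mathlib

/-!
The empirical loss is a sample mean of the per-observation LRM term with the smoothed `q̂`
plugged in. Swapping `q̂` for `q0` changes that mean by at most the sample mean of
`2 K₀(x) · (average log-ratio discrepancy of q̂ and q0 on M(x))`, which tends to `0`: the
discrepancy vanishes pointwise because `q̂ → q0` by the strong law, and A2 dominates it off a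
finite set by a `q0`-integrable function, whose tail means are controlled by the strong law again.
With `q0` plugged in, A4 makes the term Lipschitz in `θ` with a `q0`-integrable constant, so the
strong law on a countable dense subset of the totally bounded `Θ` upgrades to uniform
convergence on `Θ`. Uniform convergence and a well-separated minimiser force `θ̂ₙ → θ*`.
-/

noncomputable def l2norm {d : ℕ} (v : Fin d → ℝ) : ℝ := Real.sqrt (∑ j, v j ^ 2)

open MeasureTheory Filter Topology ProbabilityTheory

open Finset
open scoped BigOperators

theorem norm_le_l2norm {d : ℕ} (v : Fin d → ℝ) : ‖v‖ ≤ l2norm v := by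
  refine (pi_norm_le_iff_of_nonneg (Real.sqrt_nonneg _)).2 fun i => ?_
  rw [Real.norm_eq_abs, ← Real.sqrt_sq_eq_abs]
  exact Real.sqrt_le_sqrt (single_le_sum (fun j _ => sq_nonneg (v j)) (mem_univ i))

theorem tendsto_add_div_add_of_tendsto_div {N : ℕ → ℝ} {p : ℝ} (a c : ℝ)
    (h : Tendsto (fun n => N n / n) atTop (𝓝 p)) :
    Tendsto (fun n => (N n + a) / (n + c)) atTop (𝓝 p) := by
  have h' := (h.add (tendsto_const_div_atTop_nhds_zero_nat a)).mul
    (tendsto_natCast_div_add_atTop c)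
  rw [add_zero, mul_one] at h'
  refine h'.congr' ?_
  filter_upwards [eventually_ne_atTop 0] with n hn
  have hn' : (n : ℝ) ≠ 0 := Nat.cast_ne_zero.2 hn
  field_simp

theorem rpow_le_mul_exp_mul {s c t : ℝ} (hs : 0 < s) (hc : 0 < c) (ht : 0 ≤ t) :
    t ^ s ≤ (s / c) ^ s * Real.exp (c * t) := by
  have hu : 0 ≤ c * t / s := by positivity
  calc t ^ s = (s / c * (c * t / s)) ^ s := by congr 1; field_simp
    _ = (s / c) ^ s * (c * t / s) ^ s := Real.mul_rpow (by positivity) hu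
    _ ≤ (s / c) ^ s * Real.exp (c * t / s) ^ s := by
        gcongr; linarith [Real.add_one_le_exp (c * t / s)]
    _ = (s / c) ^ s * Real.exp (c * t) := by rw [← Real.exp_mul, div_mul_cancel₀ _ hs.ne']

theorem summable_mul_mul_of_summable_mul_sq {ι : Type*} {q A B : ι → ℝ} (hq : ∀ x, 0 ≤ q x)
    (hA : Summable fun x => q x * A x ^ 2) (hB : Summable fun x => q x * B x ^ 2) :
    Summable fun x => q x * (A x * B x) := by
  refine ((hA.add hB).div_const 2).of_norm_bounded fun x => ?_
  rw [Real.norm_eq_abs, abs_mul, abs_of_nonneg (hq x), abs_mul]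
  have := two_mul_le_add_sq |A x| |B x|
  rw [sq_abs, sq_abs] at this
  nlinarith [hq x]

theorem summable_mul_one_add_rpow_sq {ι : Type*} {q N : ι → ℝ} {c γ : ℝ} (hq : ∀ x, 0 ≤ q x)
    (hN : ∀ x, 0 ≤ N x) (hc : 0 < c) (hγ : 0 < γ)
    (hexp : Summable fun x => q x * Real.exp (c * N x)) :
    Summable fun x => q x * (1 + N x ^ γ) ^ 2 := by
  refine (hexp.mul_left ((1 + (γ / (c / 2)) ^ γ) ^ 2)).of_nonneg_of_le
    (fun x => mul_nonneg (hq x) (sq_nonneg _)) fun x => ?_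
  have hpoly : 1 + N x ^ γ ≤ (1 + (γ / (c / 2)) ^ γ) * Real.exp (c / 2 * N x) := by
    have := rpow_le_mul_exp_mul hγ (half_pos hc) (hN x)
    have := Real.one_le_exp (by have := hN x; positivity : 0 ≤ c / 2 * N x)
    linarith
  have hexp_sq : Real.exp (c * N x) = Real.exp (c / 2 * N x) ^ 2 := by
    rw [← Real.exp_nat_mul]; ring_nf
  calc q x * (1 + N x ^ γ) ^ 2 ≤ q x * ((1 + (γ / (c / 2)) ^ γ) * Real.exp (c / 2 * N x)) ^ 2 := by
        have := Real.rpow_nonneg (hN x) γ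
        have := hq x
        gcongr
    _ = (1 + (γ / (c / 2)) ^ γ) ^ 2 * (q x * Real.exp (c * N x)) := by rw [hexp_sq]; ring

theorem Convex.abs_sub_le_of_norm_iteratedFDerivWithin_one_le {E : Type*}
    [NormedAddCommGroup E] [NormedSpace ℝ E] {s : Set E} (hconv : Convex ℝ s) (hopen : IsOpen s)
    {f : E → ℝ} (hf : DifferentiableOn ℝ f s) {C : ℝ}
    (hC : ∀ y ∈ s, ‖iteratedFDerivWithin ℝ 1 f s y‖ ≤ C) {x y : E} (hx : x ∈ s) (hy : y ∈ s) :
    |f x - f y| ≤ C * dist x y := by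
  have hC' : ∀ z ∈ s, ‖fderivWithin ℝ f s z‖ ≤ C := fun z hz => by
    rw [← norm_iteratedFDerivWithin_one f (hopen.uniqueDiffWithinAt hz)]; exact hC z hz
  simpa [Real.norm_eq_abs, dist_eq_norm] using
    hconv.norm_image_sub_le_of_norm_fderivWithin_le hf hC' hy hx

theorem tendsto_of_isMinOn_of_tendstoUniformlyOn {α : Type*} [PseudoMetricSpace α] {Θ : Set α}
    {F : ℕ → α → ℝ} {f : α → ℝ} {θn : ℕ → α} {θ₀ : α}
    (hF : TendstoUniformlyOn F f atTop Θ) (hθn : ∀ n, θn n ∈ Θ ∧ IsMinOn (F n) Θ (θn n))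
    (hθ₀ : θ₀ ∈ Θ) (hsep : ∀ ε > 0, ∃ δ > 0, ∀ θ ∈ Θ, ε ≤ dist θ θ₀ → f θ₀ + δ ≤ f θ) :
    Tendsto θn atTop (𝓝 θ₀) := by
  refine Metric.tendsto_nhds.2 fun ε hε => ?_
  obtain ⟨δ, hδ, hsepε⟩ := hsep ε hε
  filter_upwards [Metric.tendstoUniformlyOn_iff.1 hF (δ / 2) (half_pos hδ)] with n hn
  by_contra! hfar
  obtain ⟨hmem, hmin⟩ := hθn n
  have hgap := hsepε _ hmem hfar
  have hle : F n (θn n) ≤ F n θ₀ := hmin hθ₀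
  have hn₁ := abs_lt.1 (hn _ hmem)
  have hn₀ := abs_lt.1 (hn _ hθ₀)
  linarith [hn₁.2, hn₀.1]

theorem TendstoUniformlyOn.of_abs_sub_le {α : Type*} {s : Set α} {F G : ℕ → α → ℝ}
    {f : α → ℝ} {e : ℕ → ℝ} (hG : TendstoUniformlyOn G f atTop s)
    (he : Tendsto e atTop (𝓝 0)) (hFG : ∀ n, ∀ x ∈ s, |F n x - G n x| ≤ e n) :
    TendstoUniformlyOn F f atTop s := by
  rw [Metric.tendstoUniformlyOn_iff] at hG ⊢
  intro ε hε
  filter_upwards [hG (ε / 2) (half_pos hε), he.eventually (gt_mem_nhds (half_pos hε))]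
    with n hn hen x hx
  have h₁ := abs_lt.1 (hn x hx)
  have h₂ := abs_le.1 (hFG n x hx)
  rw [Real.dist_eq, abs_lt]
  constructor <;> linarith [h₁.1, h₁.2, h₂.1, h₂.2]

theorem tendstoUniformlyOn_of_lipschitz_of_dense {α : Type*} [PseudoMetricSpace α]
    {Θ D : Set α} (hΘ : TotallyBounded Θ) (hDΘ : D ⊆ Θ) (hD : Θ ⊆ closure D)
    {F : ℕ → α → ℝ} {f : α → ℝ} {c : ℕ → ℝ} {C : ℝ} (hc : Tendsto c atTop (𝓝 C))
    (hF : ∀ n, ∀ θ ∈ Θ, ∀ θ' ∈ Θ, |F n θ - F n θ'| ≤ c n * dist θ θ')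
    (hf : ∀ θ ∈ Θ, ∀ θ' ∈ Θ, |f θ - f θ'| ≤ C * dist θ θ')
    (hFf : ∀ θ ∈ D, Tendsto (F · θ) atTop (𝓝 (f θ))) :
    TendstoUniformlyOn F f atTop Θ := by
  rw [Metric.tendstoUniformlyOn_iff]
  intro ε hε
  set B := |C| + 1
  have hB : 0 < B := by positivity
  set η := ε / (6 * B)
  have hη : 0 < η := by positivity
  obtain ⟨T, hTD, hTfin, hDT⟩ := Metric.finite_approx_of_totallyBounded (hΘ.subset hDΘ) η hη
  have hnear : ∀ θ ∈ Θ, ∃ t ∈ T, dist θ t < 2 * η := by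
    intro θ hθ
    obtain ⟨d, hd, hθd⟩ := Metric.mem_closure_iff.1 (hD hθ) η hη
    obtain ⟨t, ht, hdt⟩ := Set.mem_iUnion₂.1 (hDT hd)
    exact ⟨t, ht, by linarith [dist_triangle θ d t, Metric.mem_ball.1 hdt]⟩
  have hpt : ∀ᶠ n in atTop, ∀ t ∈ T, |F n t - f t| < ε / 3 :=
    (eventually_all_finite hTfin).2 fun t ht => by
      have := ((hFf t (hTD ht)).sub_const (f t)).abs
      rw [sub_self, abs_zero] at this
      exact this.eventually (gt_mem_nhds (by positivity))
  filter_upwards [hpt, hc.eventually (gt_mem_nhds (show C < B by linarith [le_abs_self C]))]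
    with n hn hcn θ hθ
  obtain ⟨t, ht, hθt⟩ := hnear θ hθ
  have htΘ := hDΘ (hTD ht)
  have hFθt := abs_le.1 (hF n θ hθ t htΘ)
  have hfθt := abs_le.1 (hf θ hθ t htΘ)
  have hFft := abs_lt.1 (hn t ht)
  have hd := dist_nonneg (x := θ) (y := t)
  have hcB : c n * dist θ t ≤ B * (2 * η) := by nlinarith
  have hCB : C * dist θ t ≤ B * (2 * η) := by nlinarith [le_abs_self C]
  have hBη : B * (2 * η) = ε / 3 := by simp only [η]; field_simp; ring
  rw [Real.dist_eq, abs_lt]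
  constructor <;> linarith [hFθt.1, hFθt.2, hfθt.1, hfθt.2, hFft.1, hFft.2]

theorem tendsto_expect_range_of_dominated {β : Type*} {x : ℕ → β} {φ : ℕ → β → ℝ} {b : β → ℝ}
    {τ : Finset β → ℝ} {F₀ : Finset β} (hφ₀ : ∀ n i, 0 ≤ φ n (x i))
    (hφ : ∀ i, Tendsto (fun n => φ n (x i)) atTop (𝓝 0))
    (hdom : ∀ᶠ n in atTop, ∀ y ∉ F₀, φ n y ≤ b y)
    (htail : ∀ F : Finset β,
      Tendsto (fun n => 𝔼 i ∈ range n, (↑F : Set β)ᶜ.indicator b (x i)) atTop (𝓝 (τ F)))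
    (hτ : Tendsto τ atTop (𝓝 0)) :
    Tendsto (fun n => 𝔼 i ∈ range n, φ n (x i)) atTop (𝓝 0) := by
  refine tendsto_order.2 ⟨fun a ha => .of_forall fun n =>
    ha.trans_le (expect_nonneg fun i _ => hφ₀ n i), fun ε hε => ?_⟩
  obtain ⟨F, hτF, hF₀⟩ :=
    ((hτ.eventually (gt_mem_nhds (half_pos hε))).and (eventually_ge_atTop F₀)).exists
  have hnear : ∀ᶠ n in atTop, ∀ y ∈ F, ∀ i, x i = y → φ n y < ε / 2 := by
    refine (eventually_all_finset F).2 fun y _ => ?_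
    by_cases hy : ∃ i, x i = y
    · obtain ⟨i, rfl⟩ := hy
      filter_upwards [(hφ i).eventually (gt_mem_nhds (half_pos hε))] with n hn j _ using hn
    · exact .of_forall fun n j hj => absurd ⟨j, hj⟩ hy
  filter_upwards [hnear, hdom, (htail F).eventually (gt_mem_nhds hτF), eventually_ge_atTop 1]
    with n hnear hdom htail hn
  have hbound : ∀ i ∈ range n, φ n (x i) ≤ ε / 2 + (↑F : Set β)ᶜ.indicator b (x i) := by
    intro i _
    by_cases hi : x i ∈ F
    · rw [Set.indicator_of_notMem (by simpa using hi)]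
      linarith [hnear _ hi i rfl]
    · rw [Set.indicator_of_mem (by simpa using hi)]
      linarith [hdom _ fun h => hi (hF₀ h)]
  calc 𝔼 i ∈ range n, φ n (x i)
      ≤ 𝔼 i ∈ range n, (ε / 2 + (↑F : Set β)ᶜ.indicator b (x i)) := expect_le_expect hbound
    _ = ε / 2 + 𝔼 i ∈ range n, ((↑F : Set β)ᶜ.indicator b (x i)) := by
        rw [expect_add_distrib, expect_const (nonempty_range_iff.2 (by omega))]
    _ < ε := by linarith

section SampleMeans

variable {𝒳 Ω : Type*} [Countable 𝒳] [MeasurableSpace Ω] {μ : Measure Ω} {q : 𝒳 → ℝ}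
  {X : ℕ → Ω → 𝒳}

theorem ae_forall_pos_of_measure_preimage_singleton
    (hX_dist : ∀ i x, μ (X i ⁻¹' {x}) = ENNReal.ofReal (q x)) :
    ∀ᵐ ω ∂μ, ∀ i, 0 < q (X i ω) := by
  refine ae_all_iff.2 fun i => ?_
  have hnull : μ (X i ⁻¹' {x | q x ≤ 0}) = 0 := by
    rw [← Set.biUnion_of_singleton {x | q x ≤ 0}, Set.preimage_iUnion₂,
      measure_biUnion_null_iff (Set.to_countable _)]
    intro x hx
    rw [hX_dist, ENNReal.ofReal_eq_zero.2 hx]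
  filter_upwards [measure_eq_zero_iff_ae_notMem.1 hnull] with ω hω
  simpa using hω

variable [MeasurableSpace 𝒳] [MeasurableSingletonClass 𝒳]

theorem ae_tendsto_expect_range (hq : ∀ x, 0 ≤ q x) (hX_meas : ∀ i, Measurable (X i))
    (hX_dist : ∀ i x, μ (X i ⁻¹' {x}) = ENNReal.ofReal (q x)) (hX_indep : iIndepFun X μ)
    {f : 𝒳 → ℝ} (hf : Summable fun x => q x * |f x|) :
    ∀ᵐ ω ∂μ, Tendsto (fun n => 𝔼 i ∈ range n, f (X i ω)) atTop (𝓝 (∑' x, q x * f x)) := by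
  have hf_meas : Measurable f := measurable_of_countable f
  have hlaw : ∀ i x, μ.map (X i) {x} = ENNReal.ofReal (q x) := fun i x => by
    rw [Measure.map_apply (hX_meas i) (measurableSet_singleton x), hX_dist]
  have hident : ∀ i, IdentDistrib (X i) (X 0) μ μ := fun i =>
    ⟨(hX_meas i).aemeasurable, (hX_meas 0).aemeasurable,
      Measure.ext_of_singleton fun x => by rw [hlaw, hlaw]⟩
  have hint : Integrable f (μ.map (X 0)) := by
    refine ⟨hf_meas.aestronglyMeasurable, ?_⟩
    rw [HasFiniteIntegral, lintegral_countable']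
    simp_rw [hlaw 0, ← ofReal_norm, ← ENNReal.ofReal_mul (norm_nonneg _)]
    rw [← ENNReal.ofReal_tsum_of_nonneg (fun x => mul_nonneg (norm_nonneg _) (hq x))
      (hf.congr fun x => by rw [Real.norm_eq_abs, mul_comm])]
    exact ENNReal.ofReal_lt_top
  have hslln := strong_law_ae_real (fun i ω => f (X i ω))
    ((integrable_map_measure hf_meas.aestronglyMeasurable (hX_meas 0).aemeasurable).1 hint)
    (fun i j hij => (hX_indep.indepFun hij).comp hf_meas hf_meas) fun i => (hident i).comp hf_meas
  filter_upwards [hslln] with ω hω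
  rw [← integral_map (hX_meas 0).aemeasurable hf_meas.aestronglyMeasurable,
    integral_countable hint] at hω
  simpa [expect_eq_sum_div_card, measureReal_def, hlaw, hq] using hω

theorem ae_tendstoUniformlyOn_expect_range {α : Type*} [PseudoMetricSpace α] {Θ : Set α}
    (hΘ : TotallyBounded Θ) (hq : ∀ x, 0 ≤ q x) (hX_meas : ∀ i, Measurable (X i))
    (hX_dist : ∀ i x, μ (X i ⁻¹' {x}) = ENNReal.ofReal (q x)) (hX_indep : iIndepFun X μ)
    {g : α → 𝒳 → ℝ} {H ℓ : 𝒳 → ℝ}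
    (hH : Summable fun x => q x * H x) (hgH : ∀ θ ∈ Θ, ∀ x, |g θ x| ≤ H x)
    (hℓ : Summable fun x => q x * ℓ x) (hℓ₀ : ∀ x, 0 ≤ ℓ x)
    (hg : ∀ x, 0 < q x → ∀ θ ∈ Θ, ∀ θ' ∈ Θ, |g θ x - g θ' x| ≤ ℓ x * dist θ θ') :
    ∀ᵐ ω ∂μ, TendstoUniformlyOn (fun n θ => 𝔼 i ∈ range n, g θ (X i ω))
      (fun θ => ∑' x, q x * g θ x) atTop Θ := by
  obtain ⟨D, hDΘ, hDcount, hD⟩ := hΘ.isSeparable.exists_countable_dense_subset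
  have hgabs : ∀ θ ∈ Θ, Summable fun x => q x * |g θ x| := fun θ hθ =>
    hH.of_nonneg_of_le (fun x => mul_nonneg (hq x) (abs_nonneg _))
      fun x => mul_le_mul_of_nonneg_left (hgH θ hθ x) (hq x)
  have hgsum : ∀ θ ∈ Θ, Summable fun x => q x * g θ x := fun θ hθ =>
    .of_abs ((hgabs θ hθ).congr fun x => by rw [abs_mul, abs_of_nonneg (hq x)])
  have hpt : ∀ᵐ ω ∂μ, ∀ θ ∈ D, Tendsto (fun n => 𝔼 i ∈ range n, g θ (X i ω)) atTop
      (𝓝 (∑' x, q x * g θ x)) := (ae_ball_iff hDcount).2 fun θ hθ =>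
    ae_tendsto_expect_range hq hX_meas hX_dist hX_indep (hgabs θ (hDΘ hθ))
  have hℓlim := ae_tendsto_expect_range hq hX_meas hX_dist hX_indep
    (hℓ.congr fun x => by rw [abs_of_nonneg (hℓ₀ x)])
  filter_upwards [hpt, hℓlim, ae_forall_pos_of_measure_preimage_singleton hX_dist]
    with ω hpt hℓlim hpos
  refine tendstoUniformlyOn_of_lipschitz_of_dense hΘ hDΘ hD hℓlim
    (fun n θ hθ θ' hθ' => ?_) (fun θ hθ θ' hθ' => ?_) hpt
  · rw [← expect_sub_distrib, expect_mul]
    exact (abs_expect_le _ _).trans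
      (expect_le_expect fun i _ => hg _ (hpos i) θ hθ θ' hθ')
  · rw [← (hgsum θ hθ).tsum_sub (hgsum θ' hθ'), ← tsum_mul_right, ← Real.norm_eq_abs]
    refine tsum_of_norm_bounded (hℓ.mul_right _).hasSum fun x => ?_
    rcases (hq x).eq_or_lt with hx | hx
    · simp [← hx]
    · rw [Real.norm_eq_abs, ← mul_sub, abs_mul, abs_of_pos hx, mul_assoc]
      exact mul_le_mul_of_nonneg_left (hg x hx θ hθ θ' hθ') hx.le

theorem ae_tendsto_expect_range_of_dominated (hq : ∀ x, 0 ≤ q x)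
    (hX_meas : ∀ i, Measurable (X i))
    (hX_dist : ∀ i x, μ (X i ⁻¹' {x}) = ENNReal.ofReal (q x)) (hX_indep : iIndepFun X μ)
    {φ : ℕ → Ω → 𝒳 → ℝ} (hφ₀ : ∀ n ω x, 0 ≤ φ n ω x)
    (hφ : ∀ᵐ ω ∂μ, ∀ x, 0 < q x → Tendsto (fun n => φ n ω x) atTop (𝓝 0))
    {F₀ : Finset 𝒳} {b : 𝒳 → ℝ} (hb : Summable fun x => q x * |b x|)
    (hdom : ∀ᶠ n in atTop, ∀ ω, ∀ x ∉ F₀, φ n ω x ≤ b x) :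
    ∀ᵐ ω ∂μ, Tendsto (fun n => 𝔼 i ∈ range n, φ n ω (X i ω)) atTop (𝓝 0) := by
  have htail : ∀ᵐ ω ∂μ, ∀ F : Finset 𝒳,
      Tendsto (fun n => 𝔼 i ∈ range n, (↑F : Set 𝒳)ᶜ.indicator b (X i ω)) atTop
        (𝓝 (∑' x, q x * (↑F : Set 𝒳)ᶜ.indicator b x)) :=
    ae_all_iff.2 fun F => ae_tendsto_expect_range hq hX_meas hX_dist hX_indep <|
      hb.of_nonneg_of_le (fun x => mul_nonneg (hq x) (abs_nonneg _)) fun x =>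
        mul_le_mul_of_nonneg_left (norm_indicator_le_norm_self b x) (hq x)
  have hτ : Tendsto (fun F : Finset 𝒳 => ∑' x, q x * (↑F : Set 𝒳)ᶜ.indicator b x) atTop
      (𝓝 0) := by
    refine (tendsto_tsum_compl_atTop_zero fun x => q x * b x).congr fun F => ?_
    exact (tsum_subtype ((↑F : Set 𝒳)ᶜ) fun x => q x * b x).trans
      (tsum_congr fun x => Set.indicator_mul_right _ _ _)
  filter_upwards [hφ, htail, ae_forall_pos_of_measure_preimage_singleton hX_dist]
    with ω hφω htailω hpos
  exact tendsto_expect_range_of_dominated (fun n i => hφ₀ n ω _) (fun i => hφω _ (hpos i))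
    (hdom.mono fun n h => h ω) htailω hτ

end SampleMeans

section LRM

variable {𝒳 : Type*}

noncomputable def logRatio (q : 𝒳 → ℝ) (x x' : 𝒳) : ℝ := Real.log (q x' / q x)

variable (M : 𝒳 → Finset 𝒳)

noncomputable def lrmTerm (p q : 𝒳 → ℝ) (x : 𝒳) : ℝ :=
  𝔼 x' ∈ M x, (logRatio p x x' ^ 2 - 2 * logRatio p x x' * logRatio q x x')

theorem lrmTerm_eq_one_div_card_mul_sum (p q : 𝒳 → ℝ) (x : 𝒳) :
    lrmTerm M p q x = 1 / ((M x).card : ℝ) * ∑ x' ∈ M x,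
      (Real.log (p x' / p x) ^ 2 - 2 * Real.log (p x' / p x) * Real.log (q x' / q x)) := by
  rw [lrmTerm, expect_eq_sum_div_card, one_div_mul_eq_div]
  rfl

variable {M} {p p' q q' : 𝒳 → ℝ} {x : 𝒳} {k l : ℝ}

theorem abs_lrmTerm_le (hM : (M x).Nonempty) (hp : ∀ x' ∈ M x, |logRatio p x x'| ≤ k) :
    |lrmTerm M p q x| ≤ k ^ 2 + 2 * k * 𝔼 x' ∈ M x, |logRatio q x x'| := by
  have hk : 0 ≤ k := let ⟨x', hx'⟩ := hM; (abs_nonneg _).trans (hp x' hx')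
  rw [mul_expect, ← expect_const hM (k ^ 2), ← expect_add_distrib]
  refine (abs_expect_le _ _).trans (expect_le_expect fun x' hx' => ?_)
  calc |logRatio p x x' ^ 2 - 2 * logRatio p x x' * logRatio q x x'|
      ≤ |logRatio p x x'| ^ 2 + 2 * |logRatio p x x'| * |logRatio q x x'| := by
        refine (abs_sub _ _).trans_eq ?_
        rw [abs_pow, abs_mul, abs_mul, abs_two]
    _ ≤ k ^ 2 + 2 * k * |logRatio q x x'| := by have := hp x' hx'; gcongr

theorem abs_lrmTerm_sub_left_le (hM : (M x).Nonempty) (hp : ∀ x' ∈ M x, |logRatio p x x'| ≤ k)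
    (hp' : ∀ x' ∈ M x, |logRatio p' x x'| ≤ k)
    (hpp' : ∀ x' ∈ M x, |logRatio p x x' - logRatio p' x x'| ≤ l) :
    |lrmTerm M p q x - lrmTerm M p' q x| ≤ l * (2 * k + 2 * 𝔼 x' ∈ M x, |logRatio q x x'|) := by
  have hl : 0 ≤ l := let ⟨x', hx'⟩ := hM; (abs_nonneg _).trans (hpp' x' hx')
  rw [mul_expect, ← expect_const hM (2 * k), ← expect_add_distrib, mul_expect, lrmTerm, lrmTerm,
    ← expect_sub_distrib]
  refine (abs_expect_le _ _).trans (expect_le_expect fun x' hx' => ?_)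
  have hr := abs_le.1 (hp x' hx')
  have hr' := abs_le.1 (hp' x' hx')
  have hw := abs_le.1 (le_refl |logRatio q x x'|)
  rw [show ∀ r r' w : ℝ, r ^ 2 - 2 * r * w - (r' ^ 2 - 2 * r' * w) = (r - r') * (r + r' - 2 * w)
    by intros; ring, abs_mul]
  exact mul_le_mul (hpp' x' hx') (abs_le.2 ⟨by linarith, by linarith⟩) (abs_nonneg _) hl

theorem abs_lrmTerm_sub_right_le (hp : ∀ x' ∈ M x, |logRatio p x x'| ≤ k) :
    |lrmTerm M p q x - lrmTerm M p q' x|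
      ≤ 2 * k * 𝔼 x' ∈ M x, |logRatio q x x' - logRatio q' x x'| := by
  rw [lrmTerm, lrmTerm, ← expect_sub_distrib, mul_expect]
  refine (abs_expect_le _ _).trans (expect_le_expect fun x' hx' => ?_)
  rw [show ∀ r w w' : ℝ, r ^ 2 - 2 * r * w - (r ^ 2 - 2 * r * w') = 2 * r * (w' - w)
    by intros; ring, abs_mul, abs_mul, abs_two, abs_sub_comm]
  gcongr
  exact hp x' hx'

theorem summable_mul_sq_expect_abs_logRatio {q₀ : 𝒳 → ℝ} (hq₀ : ∀ x, 0 ≤ q₀ x)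
    (h : Summable fun x => q₀ x * ∑ x' ∈ M x, logRatio q x x' ^ 2) :
    Summable fun x => q₀ x * (𝔼 x' ∈ M x, |logRatio q x x'|) ^ 2 := by
  refine h.of_nonneg_of_le (fun x => mul_nonneg (hq₀ x) (sq_nonneg _))
    fun x => mul_le_mul_of_nonneg_left ?_ (hq₀ x)
  rcases (M x).eq_empty_or_nonempty with hM | hM
  · simp [hM]
  calc (𝔼 x' ∈ M x, |logRatio q x x'|) ^ 2 = (𝔼 x' ∈ M x, |logRatio q x x'| * 1) ^ 2 := by
        simp only [mul_one]
    _ ≤ (𝔼 x' ∈ M x, |logRatio q x x'| ^ 2) * 𝔼 x' ∈ M x, (1 : ℝ) ^ 2 :=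
        expect_mul_sq_le_sq_mul_sq _ _ _
    _ = 𝔼 x' ∈ M x, logRatio q x x' ^ 2 := by simp [expect_const hM]
    _ ≤ ∑ x' ∈ M x, logRatio q x x' ^ 2 := by
        rw [expect_eq_sum_div_card]
        exact div_le_self (sum_nonneg fun _ _ => sq_nonneg _) (Nat.one_le_cast.2 hM.card_pos)

theorem tendsto_expect_abs_logRatio_sub {qn : ℕ → 𝒳 → ℝ} (hx : 0 < q x)
    (hM : ∀ x' ∈ M x, 0 < q x') (hqn : ∀ y, Tendsto (fun n => qn n y) atTop (𝓝 (q y))) :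
    Tendsto (fun n => 𝔼 x' ∈ M x, |logRatio (qn n) x x' - logRatio q x x'|) atTop (𝓝 0) := by
  have h := tendsto_finsetSum (M x) fun x' hx' =>
    ((((hqn x').div (hqn x) hx.ne').log (div_pos (hM x' hx') hx).ne').sub_const
      (logRatio q x x')).abs
  simp_rw [expect_eq_sum_div_card]
  simpa [logRatio] using h.div_const ((M x).card : ℝ)

theorem exists_summable_bound_of_rpow_growth {Ω : Type*} {q₀ N K₀ : 𝒳 → ℝ}
    {qn : ℕ → Ω → 𝒳 → ℝ} {Khat : ℕ → ℝ} {c Kq₀ γ : ℝ} (hq₀ : ∀ x, 0 ≤ q₀ x)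
    (hM : ∀ x, (M x).Nonempty) (hN : ∀ x, 0 ≤ N x) (hK₀ : ∀ x, 0 ≤ K₀ x)
    (hK₀_sq : Summable fun x => q₀ x * K₀ x ^ 2) (hc : 0 < c)
    (hexp : Summable fun x => q₀ x * Real.exp (c * N x)) (hγ : 0 < γ)
    (hKhat : IsBoundedUnder (· ≤ ·) atTop Khat)
    (hq₀_bd : ∀ x, ∀ x' ∈ M x, |logRatio q₀ x x'| ≤ Kq₀ * (1 + N x ^ γ))
    (hqn_bd : ∀ n ω x, ∀ x' ∈ M x, |logRatio (qn n ω) x x'| ≤ Khat n * (1 + N x ^ γ)) :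
    ∃ b : 𝒳 → ℝ, (Summable fun x => q₀ x * |b x|) ∧ ∀ᶠ n in atTop, ∀ ω x,
      2 * K₀ x * 𝔼 x' ∈ M x, |logRatio (qn n ω) x x' - logRatio q₀ x x'| ≤ b x := by
  obtain ⟨B, hB⟩ := hKhat
  have hN' : ∀ x, 0 ≤ 1 + N x ^ γ := fun x => by have := Real.rpow_nonneg (hN x) γ; linarith
  refine ⟨fun x => 2 * (B + Kq₀) * (K₀ x * (1 + N x ^ γ)), ?_, ?_⟩
  · refine ((summable_mul_mul_of_summable_mul_sq hq₀ hK₀_sq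
      (summable_mul_one_add_rpow_sq hq₀ hN hc hγ hexp)).mul_left (2 * |B + Kq₀|)).congr
      fun x => ?_
    rw [abs_mul, abs_mul, abs_mul, abs_of_nonneg (hK₀ x), abs_of_nonneg (hN' x), abs_two]
    ring
  · filter_upwards [eventually_map.1 hB] with n hn ω x
    have hdiff : 𝔼 x' ∈ M x, |logRatio (qn n ω) x x' - logRatio q₀ x x'|
        ≤ (B + Kq₀) * (1 + N x ^ γ) := by
      refine expect_le (hM x) fun x' hx' => (abs_sub _ _).trans ?_
      nlinarith [hqn_bd n ω x x' hx', hq₀_bd x x' hx', mul_le_mul_of_nonneg_right hn (hN' x)]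
    calc 2 * K₀ x * 𝔼 x' ∈ M x, |logRatio (qn n ω) x x' - logRatio q₀ x x'|
        ≤ 2 * K₀ x * ((B + Kq₀) * (1 + N x ^ γ)) :=
          mul_le_mul_of_nonneg_left hdiff (by linarith [hK₀ x])
      _ = 2 * (B + Kq₀) * (K₀ x * (1 + N x ^ γ)) := by ring

end LRM

section LRMConsistency

variable {𝒳 Ω : Type*} [Countable 𝒳] [MeasurableSpace 𝒳] [MeasurableSingletonClass 𝒳]
  [MeasurableSpace Ω] {μ : Measure Ω} {q₀ : 𝒳 → ℝ} {X : ℕ → Ω → 𝒳}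

theorem ae_tendsto_laplaceSmoothed [DecidableEq 𝒳] (hq₀ : ∀ x, 0 ≤ q₀ x)
    (hX_meas : ∀ i, Measurable (X i))
    (hX_dist : ∀ i x, μ (X i ⁻¹' {x}) = ENNReal.ofReal (q₀ x)) (hX_indep : iIndepFun X μ)
    {α Z : ℝ} {qd : 𝒳 → ℝ} {qhat : ℕ → Ω → 𝒳 → ℝ}
    (hqhat : ∀ n ω x, qhat n ω x =
      ((∑ i ∈ range n, if X i ω = x then (1 : ℝ) else 0) + α * qd x) / ((n : ℝ) + α * Z)) :
    ∀ᵐ ω ∂μ, ∀ x, Tendsto (fun n => qhat n ω x) atTop (𝓝 (q₀ x)) := by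
  refine ae_all_iff.2 fun x => ?_
  have hfreq := ae_tendsto_expect_range hq₀ hX_meas hX_dist hX_indep
    (f := fun y => if y = x then (1 : ℝ) else 0)
    (summable_of_ne_finset_zero (s := {x}) fun y hy => by simp_all)
  filter_upwards [hfreq] with ω hω
  simp only [hqhat]
  refine tendsto_add_div_add_of_tendsto_div _ _ ?_
  simpa [expect_eq_sum_div_card] using hω

theorem ae_tendsto_expect_plugInError [DecidableEq 𝒳] {M : 𝒳 → Finset 𝒳} (hq₀ : ∀ x, 0 ≤ q₀ x)
    (hX_meas : ∀ i, Measurable (X i))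
    (hX_dist : ∀ i x, μ (X i ⁻¹' {x}) = ENNReal.ofReal (q₀ x)) (hX_indep : iIndepFun X μ)
    (hM_supp : ∀ x, ∀ x' ∈ M x, 0 < q₀ x') {K₀ : 𝒳 → ℝ} (hK₀ : ∀ x, 0 ≤ K₀ x)
    {α Z : ℝ} {qd : 𝒳 → ℝ} {qhat : ℕ → Ω → 𝒳 → ℝ}
    (hqhat : ∀ n ω x, qhat n ω x =
      ((∑ i ∈ range n, if X i ω = x then (1 : ℝ) else 0) + α * qd x) / ((n : ℝ) + α * Z))
    {F₀ : Finset 𝒳} {b : 𝒳 → ℝ} (hb : Summable fun x => q₀ x * |b x|)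
    (hdom : ∀ᶠ n in atTop, ∀ ω, ∀ x ∉ F₀,
      2 * K₀ x * 𝔼 x' ∈ M x, |logRatio (qhat n ω) x x' - logRatio q₀ x x'| ≤ b x) :
    ∀ᵐ ω ∂μ, Tendsto (fun n => 𝔼 i ∈ range n, 2 * K₀ (X i ω) *
      𝔼 x' ∈ M (X i ω), |logRatio (qhat n ω) (X i ω) x' - logRatio q₀ (X i ω) x'|) atTop (𝓝 0) := by
  refine ae_tendsto_expect_range_of_dominated hq₀ hX_meas hX_dist hX_indep
    (φ := fun n ω x => 2 * K₀ x * 𝔼 x' ∈ M x, |logRatio (qhat n ω) x x' - logRatio q₀ x x'|)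
    (fun n ω x => mul_nonneg (mul_nonneg zero_le_two (hK₀ x))
      (expect_nonneg fun _ _ => abs_nonneg _)) ?_ hb hdom
  filter_upwards [ae_tendsto_laplaceSmoothed hq₀ hX_meas hX_dist hX_indep hqhat] with ω hω x hx
  simpa using (tendsto_expect_abs_logRatio_sub hx (hM_supp x) hω).const_mul (2 * K₀ x)

theorem ae_tendstoUniformlyOn_expect_lrmTerm {M : 𝒳 → Finset 𝒳} {d : ℕ}
    {Θ : Set (Fin d → ℝ)} (hΘ_open : IsOpen Θ) (hΘ_convex : Convex ℝ Θ)
    (hΘ_bounded : Bornology.IsBounded Θ) (hq₀ : ∀ x, 0 ≤ q₀ x)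
    (hX_meas : ∀ i, Measurable (X i))
    (hX_dist : ∀ i x, μ (X i ⁻¹' {x}) = ENNReal.ofReal (q₀ x)) (hX_indep : iIndepFun X μ)
    (hM : ∀ x, (M x).Nonempty) (hM_supp : ∀ x, ∀ x' ∈ M x, 0 < q₀ x')
    (hq₀_adm : Summable fun x => q₀ x * ∑ x' ∈ M x, logRatio q₀ x x' ^ 2)
    {pθ : (Fin d → ℝ) → 𝒳 → ℝ} (hpθ_pos : ∀ θ ∈ Θ, ∀ x, 0 < q₀ x → 0 < pθ θ x)
    (hpθ_diff : ∀ x, DifferentiableOn ℝ (fun θ => pθ θ x) Θ) {K₀ K₁ : 𝒳 → ℝ}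
    (hK₀_nonneg : ∀ x, 0 ≤ K₀ x) (hK₁_nonneg : ∀ x, 0 ≤ K₁ x)
    (hK₀_sq : Summable fun x => q₀ x * K₀ x ^ 2) (hK₁_sq : Summable fun x => q₀ x * K₁ x ^ 2)
    (hK₀ : ∀ x, ∀ x' ∈ M x, ∀ θ ∈ Θ, |logRatio (pθ θ) x x'| ≤ K₀ x)
    (hK₁ : ∀ x, ∀ x' ∈ M x, ∀ θ ∈ Θ,
      ‖iteratedFDerivWithin ℝ 1 (fun t => logRatio (pθ t) x x') Θ θ‖ ≤ K₁ x) :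
    ∀ᵐ ω ∂μ, TendstoUniformlyOn (fun n θ => 𝔼 i ∈ range n, lrmTerm M (pθ θ) q₀ (X i ω))
      (fun θ => ∑' x, q₀ x * lrmTerm M (pθ θ) q₀ x) atTop Θ := by
  set A : 𝒳 → ℝ := fun x => 𝔼 x' ∈ M x, |logRatio q₀ x x'|
  have hA_nonneg : ∀ x, 0 ≤ A x := fun x => expect_nonneg fun _ _ => abs_nonneg _
  have hA_sq : Summable fun x => q₀ x * A x ^ 2 := summable_mul_sq_expect_abs_logRatio hq₀ hq₀_adm
  have hlip : ∀ x, 0 < q₀ x → ∀ x' ∈ M x, ∀ θ ∈ Θ, ∀ θ' ∈ Θ,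
      |logRatio (pθ θ) x x' - logRatio (pθ θ') x x'| ≤ K₁ x * dist θ θ' := by
    intro x hx x' hx' θ hθ θ' hθ'
    have hpos : ∀ y, 0 < q₀ y → ∀ t ∈ Θ, pθ t y ≠ 0 := fun y hy t ht => (hpθ_pos t ht y hy).ne'
    have hdiv : DifferentiableOn ℝ (fun t => pθ t x' / pθ t x) Θ := by
      simpa only [div_eq_mul_inv] using
        (hpθ_diff x').fun_mul ((hpθ_diff x).fun_inv (hpos x hx))
    exact hΘ_convex.abs_sub_le_of_norm_iteratedFDerivWithin_one_le hΘ_open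
      (hdiv.log fun t ht => div_ne_zero (hpos x' (hM_supp x x' hx') t ht) (hpos x hx t ht))
      (hK₁ x x' hx') hθ hθ'
  refine ae_tendstoUniformlyOn_expect_range
    (hΘ_bounded.isCompact_closure.totallyBounded.subset subset_closure) hq₀ hX_meas hX_dist
    hX_indep (H := fun x => K₀ x ^ 2 + 2 * K₀ x * A x) (ℓ := fun x => 2 * K₁ x * (K₀ x + A x))
    ?_ (fun θ hθ x => abs_lrmTerm_le (hM x) fun x' hx' => hK₀ x x' hx' θ hθ) ?_
    (fun x => by have := hK₀_nonneg x; have := hK₁_nonneg x; have := hA_nonneg x; positivity)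
    fun x hx θ hθ θ' hθ' => ?_
  · exact (hK₀_sq.add ((summable_mul_mul_of_summable_mul_sq hq₀ hK₀_sq hA_sq).mul_left 2)).congr
      fun x => by ring
  · exact (((summable_mul_mul_of_summable_mul_sq hq₀ hK₁_sq hK₀_sq).add
      (summable_mul_mul_of_summable_mul_sq hq₀ hK₁_sq hA_sq)).mul_left 2).congr fun x => by ring
  · exact (abs_lrmTerm_sub_left_le (hM x) (fun x' hx' => hK₀ x x' hx' θ hθ)
      (fun x' hx' => hK₀ x x' hx' θ' hθ') fun x' hx' => hlip x hx x' hx' θ hθ θ' hθ').trans_eq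
      (by ring)

end LRMConsistency

theorem lrm_estimator_strong_consistency_general
    {𝒳 : Type*} [Countable 𝒳] [DecidableEq 𝒳] [MeasurableSpace 𝒳] [MeasurableSingletonClass 𝒳]
    {Ω : Type*} [MeasurableSpace Ω] (μ : Measure Ω)
    {d : ℕ} (Θ : Set (Fin d → ℝ))
    -- q0 is a PMF on 𝒳
    (q0 : 𝒳 → ℝ) (hq0_nonneg : ∀ x, 0 ≤ q0 x)
    -- matching set with M(x) ⊆ supp(q0) and |M(x)| = m < ∞
    (M : 𝒳 → Finset 𝒳) (m : ℕ) (hm : 0 < m) (hM_card : ∀ x, (M x).card = m)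
    (hM_supp : ∀ x, ∀ x' ∈ M x, 0 < q0 x')
    -- Standing Assumption (a): q0 ∈ Q^adm_{q0}(𝒳)
    (hq0_adm : Summable fun x => q0 x * ∑ x' ∈ M x, (Real.log (q0 x' / q0 x)) ^ 2)
    -- the model family
    (pθ : (Fin d → ℝ) → 𝒳 → ℝ)
    -- Standing Assumption (b): every p_θ, θ ∈ Θ, lies in Q^adm_{q0}(𝒳)
    (hpθ_pos : ∀ θ ∈ Θ, ∀ x, 0 < q0 x → 0 < pθ θ x)
    -- i.i.d. observations from q0
    (X : ℕ → Ω → 𝒳)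
    (hX_meas : ∀ i, Measurable (X i))
    (hX_dist : ∀ i x, μ (X i ⁻¹' {x}) = ENNReal.ofReal (q0 x))
    (hX_indep : iIndepFun X μ)
    -- the Laplace-smoothed estimator q̂_α with α > 0
    (α : ℝ)
    (qdag : 𝒳 → ℝ)
    (Zdag : ℝ)
    (qhat : ℕ → Ω → 𝒳 → ℝ)
    (hqhat : ∀ n ω x, qhat n ω x =
      ((∑ i ∈ Finset.range n, if X i ω = x then (1 : ℝ) else 0) + α * qdag x)
        / ((n : ℝ) + α * Zdag))
    -- Assumption A2: either 𝒳 is finite, or 𝒳 is countably infinite, q0 is subexponential,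
    -- and the log-ratios of q0 and q̂_α grow at most polynomially
    (nrmX : 𝒳 → ℝ) (hnrmX : ∀ x, 0 ≤ nrmX x)
    (hA2 : Finite 𝒳 ∨
      (Infinite 𝒳 ∧ (∃ c > (0 : ℝ), Summable fun x => q0 x * Real.exp (c * nrmX x)) ∧
        ∃ Kq0 > (0 : ℝ), ∃ γ > (1 : ℝ), ∃ Khat : ℕ → ℝ,
          (∀ n, 0 ≤ Khat n) ∧ IsBoundedUnder (· ≤ ·) atTop Khat ∧
          (∀ x, ∀ x' ∈ M x, |Real.log (q0 x' / q0 x)| ≤ Kq0 * (1 + nrmX x ^ γ)) ∧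
          (∀ n ω x, ∀ x' ∈ M x,
            |Real.log (qhat n ω x' / qhat n ω x)| ≤ Khat n * (1 + nrmX x ^ γ))))
    -- the population and empirical LRM losses
    (Lpop : (Fin d → ℝ) → ℝ)
    (hLpop : ∀ θ, Lpop θ = ∑' x, q0 x * ((1 / ((M x).card : ℝ)) *
      ∑ x' ∈ M x, ((Real.log (pθ θ x' / pθ θ x)) ^ 2
        - 2 * Real.log (pθ θ x' / pθ θ x) * Real.log (q0 x' / q0 x))))
    (Lhat : ℕ → Ω → (Fin d → ℝ) → ℝ)
    (hLhat : ∀ n ω θ, Lhat n ω θ = (1 / (n : ℝ)) * ∑ i ∈ Finset.range n,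
      ((1 / ((M (X i ω)).card : ℝ)) * ∑ x' ∈ M (X i ω),
        ((Real.log (pθ θ x' / pθ θ (X i ω))) ^ 2
          - 2 * Real.log (pθ θ x' / pθ θ (X i ω))
              * Real.log (qhat n ω x' / qhat n ω (X i ω)))))
    -- Assumption A3: Θ is open, convex and bounded, and empirical minimisers
    -- eventually exist almost surely
    (hΘ_open : IsOpen Θ) (hΘ_convex : Convex ℝ Θ) (hΘ_bounded : Bornology.IsBounded Θ)
    -- Assumption A4 with r = 0: smoothness of the model and an L²(q0) envelope for the
    -- log-ratios (derivatives of order 0 and 1)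
    (hA4_smooth : ∀ x, ContDiffOn ℝ 3 (fun θ => pθ θ x) Θ)
    (K : ℕ → 𝒳 → ℝ)
    (hK_L2 : ∀ ρ ≤ 1, Summable fun x => q0 x * (K ρ x) ^ 2)
    (hA4_bound : ∀ ρ ≤ 1, ∀ x, ∀ x' ∈ M x, ∀ θ ∈ Θ,
      ‖iteratedFDerivWithin ℝ ρ (fun t => Real.log (pθ t x' / pθ t x)) Θ θ‖ ≤ K ρ x)
    -- Assumption A5: empirical minimisers θ̂_n exist for all n, and there is a unique,
    -- well-separated population minimiser θ*
    (θhat : ℕ → Ω → (Fin d → ℝ))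
    (hθhat : ∀ n ω, θhat n ω ∈ Θ ∧ IsMinOn (Lhat n ω) Θ (θhat n ω))
    (θstar : Fin d → ℝ) (hθstar_mem : θstar ∈ Θ)
    (hθstar_sep : ∀ ε > (0 : ℝ), ∃ δ > (0 : ℝ), ∀ θ ∈ Θ,
      ε ≤ l2norm (θ - θstar) → Lpop θstar + δ ≤ Lpop θ) :
    -- conclusion: strong consistency of the empirical minimiser
    ∀ᵐ ω ∂μ, Tendsto (fun n => θhat n ω) atTop (𝓝 θstar) := by
  have hM : ∀ x, (M x).Nonempty := fun x => card_pos.1 ((hM_card x).symm ▸ hm)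
  have hK₀ : ∀ x, ∀ x' ∈ M x, ∀ θ ∈ Θ, |logRatio (pθ θ) x x'| ≤ K 0 x := fun x x' hx' θ hθ => by
    have h := hA4_bound 0 zero_le_one x x' hx' θ hθ
    rwa [norm_iteratedFDerivWithin_zero, Real.norm_eq_abs] at h
  have hK_nonneg : ∀ ρ ≤ 1, ∀ x, 0 ≤ K ρ x := fun ρ hρ x =>
    (norm_nonneg _).trans (hA4_bound ρ hρ x _ (hM x).choose_spec θstar hθstar_mem)
  have hLpop' : (fun θ => ∑' x, q0 x * lrmTerm M (pθ θ) q0 x) = Lpop :=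
    funext fun θ => by simp only [hLpop, lrmTerm_eq_one_div_card_mul_sum]
  have hULLN := hLpop' ▸ ae_tendstoUniformlyOn_expect_lrmTerm hΘ_open hΘ_convex hΘ_bounded
    hq0_nonneg hX_meas hX_dist hX_indep hM hM_supp hq0_adm hpθ_pos
    (fun x => (hA4_smooth x).differentiableOn (by norm_num)) (hK_nonneg 0 zero_le_one)
    (hK_nonneg 1 le_rfl) (hK_L2 0 zero_le_one) (hK_L2 1 le_rfl) hK₀ (hA4_bound 1 le_rfl)
  obtain ⟨F₀, b, hb, hdom⟩ : ∃ (F₀ : Finset 𝒳) (b : 𝒳 → ℝ), (Summable fun x => q0 x * |b x|) ∧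
      ∀ᶠ n in atTop, ∀ ω, ∀ x ∉ F₀,
        2 * K 0 x * 𝔼 x' ∈ M x, |logRatio (qhat n ω) x x' - logRatio q0 x x'| ≤ b x := by
    rcases hA2 with hfin | ⟨-, ⟨c, hc, hexp⟩, Kq0, -, γ, hγ, Khat, -, hKhat, hq0_bd, hqhat_bd⟩
    · have := Fintype.ofFinite 𝒳
      exact ⟨univ, 0, by simp, .of_forall fun _ _ x hx => absurd (mem_univ x) hx⟩
    · obtain ⟨b, hb, hdom⟩ := exists_summable_bound_of_rpow_growth hq0_nonneg hM hnrmX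
        (hK_nonneg 0 zero_le_one) (hK_L2 0 zero_le_one) hc hexp (by linarith) hKhat hq0_bd hqhat_bd
      exact ⟨∅, b, hb, hdom.mono fun n h ω x _ => h ω x⟩
  have hplugin := ae_tendsto_expect_plugInError hq0_nonneg hX_meas hX_dist hX_indep hM_supp
    (hK_nonneg 0 zero_le_one) hqhat hb hdom
  filter_upwards [hULLN, hplugin] with ω hU hP
  refine tendsto_of_isMinOn_of_tendstoUniformlyOn (hU.of_abs_sub_le hP fun n θ hθ => ?_)
    (fun n => hθhat n ω) hθstar_mem fun ε hε => ?_
  · have hLhat' : Lhat n ω θ = 𝔼 i ∈ range n, lrmTerm M (pθ θ) (qhat n ω) (X i ω) := by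
      simp only [hLhat, lrmTerm_eq_one_div_card_mul_sum, expect_eq_sum_div_card, card_range,
        one_div_mul_eq_div]
    rw [hLhat', ← expect_sub_distrib]
    exact (abs_expect_le _ _).trans (expect_le_expect fun i _ =>
      abs_lrmTerm_sub_right_le fun x' hx' => hK₀ _ x' hx' θ hθ)
  · obtain ⟨δ, hδ, hsep⟩ := hθstar_sep ε hε
    exact ⟨δ, hδ, fun θ hθ hεθ =>
      hsep θ hθ (hεθ.trans ((dist_eq_norm θ θstar).trans_le (norm_le_l2norm _)))⟩

/-- Strong consistency of the LRM minimum-loss estimator. Under the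
standing assumptions, Assumption A2, Assumption A3, Assumption A4 with `r = 1`, and
Assumption A5 (existence of empirical minimisers `θ̂_n` and a unique well-separated
population minimiser `θ*`), the empirical minimiser satisfies `θ̂_n → θ*` almost surely. -/
theorem lrm_estimator_strong_consistency
    {𝒳 : Type*} [Countable 𝒳] [DecidableEq 𝒳] [MeasurableSpace 𝒳] [MeasurableSingletonClass 𝒳]
    {Ω : Type*} [MeasurableSpace Ω] (μ : Measure Ω) [IsProbabilityMeasure μ]
    {d : ℕ} (Θ : Set (Fin d → ℝ))
    -- q0 is a PMF on 𝒳
    (q0 : 𝒳 → ℝ) (hq0_nonneg : ∀ x, 0 ≤ q0 x) (hq0_sum : ∑' x, q0 x = 1)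
    -- matching set with M(x) ⊆ supp(q0) and |M(x)| = m < ∞
    (M : 𝒳 → Finset 𝒳) (m : ℕ) (hm : 0 < m) (hM_card : ∀ x, (M x).card = m)
    (hM_supp : ∀ x, ∀ x' ∈ M x, 0 < q0 x')
    -- Standing Assumption (a): q0 ∈ Q^adm_{q0}(𝒳)
    (hq0_adm : Summable fun x => q0 x * ∑ x' ∈ M x, (Real.log (q0 x' / q0 x)) ^ 2)
    -- the model family
    (pθ : (Fin d → ℝ) → 𝒳 → ℝ)
    -- Standing Assumption (b): every p_θ, θ ∈ Θ, lies in Q^adm_{q0}(𝒳)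
    (hpθ_pos : ∀ θ ∈ Θ, ∀ x, 0 < q0 x → 0 < pθ θ x)
    (hpθ_supp : ∀ θ ∈ Θ, ∀ x, 0 < pθ θ x → 0 < q0 x)
    (hpθ_adm : ∀ θ ∈ Θ, Summable fun x => q0 x * ∑ x' ∈ M x, (Real.log (pθ θ x' / pθ θ x)) ^ 2)
    -- i.i.d. observations from q0
    (X : ℕ → Ω → 𝒳)
    (hX_meas : ∀ i, Measurable (X i))
    (hX_dist : ∀ i x, μ (X i ⁻¹' {x}) = ENNReal.ofReal (q0 x))
    (hX_indep : iIndepFun X μ)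
    -- the Laplace-smoothed estimator q̂_α with α > 0
    (α : ℝ) (hα : 0 < α)
    (qdag : 𝒳 → ℝ) (hqdag_nonneg : ∀ x, 0 ≤ qdag x) (hqdag_pos : ∀ x, 0 < q0 x → 0 < qdag x)
    (Zdag : ℝ) (hZdag : HasSum qdag Zdag)
    (qhat : ℕ → Ω → 𝒳 → ℝ)
    (hqhat : ∀ n ω x, qhat n ω x =
      ((∑ i ∈ Finset.range n, if X i ω = x then (1 : ℝ) else 0) + α * qdag x)
        / ((n : ℝ) + α * Zdag))
    -- Standing Assumption (c): q̂_α ∈ Q^adm_{q0}(𝒳) almost surely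
    (hqhat_adm : ∀ n, ∀ᵐ ω ∂μ,
      Summable fun x => q0 x * ∑ x' ∈ M x, (Real.log (qhat n ω x' / qhat n ω x)) ^ 2)
    -- Assumption A2: either 𝒳 is finite, or 𝒳 is countably infinite, q0 is subexponential,
    -- and the log-ratios of q0 and q̂_α grow at most polynomially
    (nrmX : 𝒳 → ℝ) (hnrmX : ∀ x, 0 ≤ nrmX x)
    (hA2 : Finite 𝒳 ∨
      (Infinite 𝒳 ∧ (∃ c > (0 : ℝ), Summable fun x => q0 x * Real.exp (c * nrmX x)) ∧
        ∃ Kq0 > (0 : ℝ), ∃ γ > (1 : ℝ), ∃ Khat : ℕ → ℝ,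
          (∀ n, 0 ≤ Khat n) ∧ IsBoundedUnder (· ≤ ·) atTop Khat ∧
          (∀ x, ∀ x' ∈ M x, |Real.log (q0 x' / q0 x)| ≤ Kq0 * (1 + nrmX x ^ γ)) ∧
          (∀ n ω x, ∀ x' ∈ M x,
            |Real.log (qhat n ω x' / qhat n ω x)| ≤ Khat n * (1 + nrmX x ^ γ))))
    -- the population and empirical LRM losses
    (Lpop : (Fin d → ℝ) → ℝ)
    (hLpop : ∀ θ, Lpop θ = ∑' x, q0 x * ((1 / ((M x).card : ℝ)) *
      ∑ x' ∈ M x, ((Real.log (pθ θ x' / pθ θ x)) ^ 2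
        - 2 * Real.log (pθ θ x' / pθ θ x) * Real.log (q0 x' / q0 x))))
    (Lhat : ℕ → Ω → (Fin d → ℝ) → ℝ)
    (hLhat : ∀ n ω θ, Lhat n ω θ = (1 / (n : ℝ)) * ∑ i ∈ Finset.range n,
      ((1 / ((M (X i ω)).card : ℝ)) * ∑ x' ∈ M (X i ω),
        ((Real.log (pθ θ x' / pθ θ (X i ω))) ^ 2
          - 2 * Real.log (pθ θ x' / pθ θ (X i ω))
              * Real.log (qhat n ω x' / qhat n ω (X i ω)))))
    -- Assumption A3: Θ is open, convex and bounded, and empirical minimisers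
    -- eventually exist almost surely
    (hΘ_open : IsOpen Θ) (hΘ_convex : Convex ℝ Θ) (hΘ_bounded : Bornology.IsBounded Θ)
    (hA3_min : ∀ᵐ ω ∂μ, ∀ᶠ n in atTop, ∃ θ ∈ Θ, IsMinOn (Lhat n ω) Θ θ)
    -- Assumption A4 with r = 0: smoothness of the model and an L²(q0) envelope for the
    -- log-ratios (derivatives of order 0 and 1)
    (hA4_smooth : ∀ x, ContDiffOn ℝ 3 (fun θ => pθ θ x) Θ)
    (K : ℕ → 𝒳 → ℝ)
    (hK_L2 : ∀ ρ ≤ 1, Summable fun x => q0 x * (K ρ x) ^ 2)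
    (hA4_bound : ∀ ρ ≤ 1, ∀ x, ∀ x' ∈ M x, ∀ θ ∈ Θ,
      ‖iteratedFDerivWithin ℝ ρ (fun t => Real.log (pθ t x' / pθ t x)) Θ θ‖ ≤ K ρ x)
    -- Assumption A5: empirical minimisers θ̂_n exist for all n, and there is a unique,
    -- well-separated population minimiser θ*
    (θhat : ℕ → Ω → (Fin d → ℝ))
    (hθhat : ∀ n ω, θhat n ω ∈ Θ ∧ IsMinOn (Lhat n ω) Θ (θhat n ω))
    (θstar : Fin d → ℝ) (hθstar_mem : θstar ∈ Θ) (hθstar_min : IsMinOn Lpop Θ θstar)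
    (hθstar_sep : ∀ ε > (0 : ℝ), ∃ δ > (0 : ℝ), ∀ θ ∈ Θ,
      ε ≤ l2norm (θ - θstar) → Lpop θstar + δ ≤ Lpop θ) :
    -- conclusion: strong consistency of the empirical minimiser
    ∀ᵐ ω ∂μ, Tendsto (fun n => θhat n ω) atTop (𝓝 θstar) :=
  lrm_estimator_strong_consistency_general μ Θ q0 hq0_nonneg M m hm hM_card hM_supp hq0_adm pθ
    hpθ_pos X hX_meas hX_dist hX_indep α qdag Zdag qhat hqhat nrmX hnrmX hA2 Lpop hLpop Lhat hLhat
    hΘ_open hΘ_convex hΘ_bounded hA4_smooth K hK_L2 hA4_bound θhat hθhat θstar hθstar_mem hθstar_sep
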